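/- arXiv:2505.23458 — 5 statements merged into one kernel-verified Lean document; each statement's English description precedes it below -/
import Mathlib

section
/- Let (α, 𝒜) be a measurable space, μ a probability measure on α, Q : α → ℝ a bounded measurable function, and set V = ∫ Q(a) dμ(a). Let f : ℝ → ℝ be a bounded, measurable, non-negative, monotone non-decreasing function satisfying ∫ f(Q(a) − V) dμ(a) = 1. Then ∫ Q(a)·f(Q(a) − V) dμ(a) ≥ V. -/
open MeasureTheory

/-- Lemma A.2 (measure-theoretic core): the normalized reweighting of a
probability measure by a non-negative non-decreasing function of the
advantage `Q - V` has expected `Q`-value at least `V`. -/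
theorem reweighted_expectation_ge
    {α : Type*} [MeasurableSpace α]
    (μ : Measure α) [IsProbabilityMeasure μ]
    (Q : α → ℝ) (hQ_meas : Measurable Q) (hQ_bdd : ∃ C : ℝ, ∀ a, |Q a| ≤ C)
    (V : ℝ) (hV : V = ∫ a, Q a ∂μ)
    (f : ℝ → ℝ)
    (hf_meas : Measurable f) (hf_bdd : ∃ C : ℝ, ∀ x, |f x| ≤ C)
    (hf_nonneg : ∀ x, 0 ≤ f x) (hf_mono : Monotone f)
    (hf_norm : ∫ a, f (Q a - V) ∂μ = 1) :
    ∫ a, Q a * f (Q a - V) ∂μ ≥ V := by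
  obtain ⟨CQ, hCQ⟩ := hQ_bdd
  obtain ⟨Cf, hCf⟩ := hf_bdd
  have hQm : Measurable fun a => Q a - V := hQ_meas.sub measurable_const
  have hfQm : Measurable fun a => f (Q a - V) := hf_meas.comp hQm
  have hint_Q : Integrable Q μ :=
    ⟨hQ_meas.aestronglyMeasurable,
      HasFiniteIntegral.of_bounded (C := CQ) (ae_of_all _ fun a => by
        simpa using hCQ a)⟩
  have hint_f : Integrable (fun a => f (Q a - V)) μ :=
    ⟨hfQm.aestronglyMeasurable,
      HasFiniteIntegral.of_bounded (C := Cf) (ae_of_all _ fun a => by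
        simpa using hCf _)⟩
  have hint_Qf : Integrable (fun a => (Q a - V) * f (Q a - V)) μ :=
    ⟨((hQm.mul hfQm)).aestronglyMeasurable,
      HasFiniteIntegral.of_bounded (C := (|V| + CQ) * Cf) (ae_of_all _ fun a => by
        simp only [Real.norm_eq_abs, abs_mul]
        have h1 : |Q a - V| ≤ |V| + CQ := by
          have := abs_sub_abs_le_abs_sub (Q a) V
          have := abs_sub (Q a) V
          calc |Q a - V| ≤ |Q a| + |V| := abs_sub _ _
            _ ≤ CQ + |V| := by linarith [hCQ a]
            _ = |V| + CQ := by ring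
        exact mul_le_mul h1 (hCf _) (abs_nonneg _) ((abs_nonneg (Q a - V)).trans h1))⟩
  -- pointwise inequality: x * f x ≥ x * f 0
  have hpt : ∀ a, (Q a - V) * f 0 ≤ (Q a - V) * f (Q a - V) := by
    intro a
    rcases le_total 0 (Q a - V) with h | h
    · exact mul_le_mul_of_nonneg_left (hf_mono h) h
    · exact mul_le_mul_of_nonpos_left (hf_mono h) h
  have hint_Qf0 : Integrable (fun a => (Q a - V) * f 0) μ :=
    (hint_Q.sub (integrable_const V)).mul_const _
  have key : 0 ≤ ∫ a, (Q a - V) * f (Q a - V) ∂μ := by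
    have h1 : ∫ a, (Q a - V) * f 0 ∂μ ≤ ∫ a, (Q a - V) * f (Q a - V) ∂μ :=
      integral_mono hint_Qf0 hint_Qf hpt
    have h2 : ∫ a, (Q a - V) * f 0 ∂μ = 0 := by
      rw [integral_mul_const, integral_sub hint_Q (integrable_const V)]
      simp [← hV]
    linarith
  have expand : ∫ a, Q a * f (Q a - V) ∂μ
      = (∫ a, (Q a - V) * f (Q a - V) ∂μ) + V := by
    have : ∀ a, Q a * f (Q a - V) = (Q a - V) * f (Q a - V) + V * f (Q a - V) := by
      intro a; ring
    rw [integral_congr_ae (ae_of_all _ this),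
      integral_add hint_Qf ((hint_f.const_mul V)),
      integral_const_mul, hf_norm]
    ring
  rw [ge_iff_le, expand]
  linarith
end

section
/- Let (α, 𝒜) be a measurable space, μ a probability measure on α, Q : α → ℝ a bounded measurable function, and set V = ∫ Q(a) dμ(a). Let f : ℝ → ℝ be a bounded, measurable, non-negative, monotone non-decreasing function, and suppose Z = ∫ f(Q(a) − V) dμ(a) > 0. Define the probability measure ν on α by dν/dμ = f(Q − V)/Z. Then ∫ Q(a) dν(a) ≥ ∫ Q(a) dμ(a). -/
/-!
The density of `ν` is a monotone function `h ∘ Q` of `Q`, and a random variable is nonnegatively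
correlated with any monotone function of itself (Chebyshev's association inequality): with
`m = ∫ Q dμ`, the pointwise inequality `(Q - m) (h Q - h m) ≥ 0` integrates to
`∫ Q · h Q dμ ≥ m ∫ h Q dμ`. Dividing by `Z = ∫ h Q dμ` gives `∫ Q dν ≥ m`.
-/

open MeasureTheory

namespace MeasureTheory

variable {α : Type*} [MeasurableSpace α] {μ : Measure α}

theorem integral_withDensity_ofReal {ρ : α → ℝ} (hρ : AEMeasurable ρ μ) (hρ_nonneg : 0 ≤ᵐ[μ] ρ)
    (g : α → ℝ) :
    ∫ a, g a ∂μ.withDensity (fun a => ENNReal.ofReal (ρ a)) = ∫ a, ρ a * g a ∂μ := by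
  rw [integral_withDensity_eq_integral_toReal_smul₀ hρ.ennreal_ofReal
    (ae_of_all _ fun _ => ENNReal.ofReal_lt_top)]
  refine integral_congr_ae ?_
  filter_upwards [hρ_nonneg] with a ha
  rw [ENNReal.toReal_ofReal ha, smul_eq_mul]

theorem Monotone.integral_mul_integral_comp_le [IsProbabilityMeasure μ] {X : α → ℝ} {h : ℝ → ℝ}
    (hh : Monotone h) (hX : Integrable X μ) (hhX : Integrable (fun a => h (X a)) μ)
    (hhXX : Integrable (fun a => h (X a) * X a) μ) :
    (∫ a, X a ∂μ) * ∫ a, h (X a) ∂μ ≤ ∫ a, h (X a) * X a ∂μ := by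
  set m := ∫ a, X a ∂μ
  have hcentered : ∫ a, h m * (X a - m) ∂μ = 0 := by
    rw [integral_const_mul, integral_sub hX (integrable_const m), integral_const, probReal_univ,
      one_smul, sub_self, mul_zero]
  have hpointwise : ∀ a, h m * (X a - m) ≤ h (X a) * X a - m * h (X a) := by
    intro a
    rcases le_total m (X a) with hle | hle <;> nlinarith [hh hle]
  have hmono : ∫ a, h m * (X a - m) ∂μ ≤ ∫ a, (h (X a) * X a - m * h (X a)) ∂μ :=
    integral_mono ((hX.sub (integrable_const m)).const_mul (h m)) (hhXX.sub (hhX.const_mul m))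
      hpointwise
  rw [hcentered, integral_sub hhXX (hhX.const_mul m), integral_const_mul] at hmono
  linarith

end MeasureTheory

theorem reweighting_improvement_general
    {α : Type*} [MeasurableSpace α]
    (μ : Measure α) [IsProbabilityMeasure μ]
    (Q : α → ℝ) (hQ_meas : Measurable Q) (hQ_bdd : ∃ C : ℝ, ∀ a, |Q a| ≤ C)
    (V : ℝ)
    (f : ℝ → ℝ)
    (hf_meas : Measurable f) (hf_bdd : ∃ C : ℝ, ∀ x, |f x| ≤ C)
    (hf_nonneg : ∀ x, 0 ≤ f x) (hf_mono : Monotone f)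
    (Z : ℝ) (hZ : Z = ∫ a, f (Q a - V) ∂μ) (hZ_pos : 0 < Z)
    (ν : Measure α)
    (hν : ν = μ.withDensity (fun a => ENNReal.ofReal (f (Q a - V) / Z))) :
    ∫ a, Q a ∂ν ≥ ∫ a, Q a ∂μ := by
  obtain ⟨CQ, hCQ⟩ := hQ_bdd
  obtain ⟨Cf, hCf⟩ := hf_bdd
  have hfQ_meas : Measurable fun a => f (Q a - V) := hf_meas.comp (hQ_meas.sub measurable_const)
  have hQ_int : Integrable Q μ :=
    .of_bound hQ_meas.aestronglyMeasurable CQ (ae_of_all _ hCQ)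
  have hfQ_int : Integrable (fun a => f (Q a - V)) μ :=
    .of_bound hfQ_meas.aestronglyMeasurable Cf (ae_of_all _ fun _ => hCf _)
  have hcorr := Monotone.integral_mul_integral_comp_le (h := fun x => f (x - V))
    (fun _ _ hxy => hf_mono (sub_le_sub_right hxy V)) hQ_int hfQ_int
    (hQ_int.bdd_mul hfQ_meas.aestronglyMeasurable (ae_of_all _ fun _ => hCf _))
  rw [hν, integral_withDensity_ofReal (hfQ_meas.div_const Z).aemeasurable
    (ae_of_all _ fun _ => div_nonneg (hf_nonneg _) hZ_pos.le)]
  simp_rw [div_mul_eq_mul_div, integral_div]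
  rw [ge_iff_le, le_div_iff₀ hZ_pos, hZ]
  exact hcorr

/-- Per-state policy improvement by reweighting (Theorem A.4): the measure
`ν` with density `f(Q - V)/Z` w.r.t. `μ` has expected `Q`-value at least
`∫ Q dμ`. -/
theorem reweighting_improvement
    {α : Type*} [MeasurableSpace α]
    (μ : Measure α) [IsProbabilityMeasure μ]
    (Q : α → ℝ) (hQ_meas : Measurable Q) (hQ_bdd : ∃ C : ℝ, ∀ a, |Q a| ≤ C)
    (V : ℝ) (hV : V = ∫ a, Q a ∂μ)
    (f : ℝ → ℝ)
    (hf_meas : Measurable f) (hf_bdd : ∃ C : ℝ, ∀ x, |f x| ≤ C)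
    (hf_nonneg : ∀ x, 0 ≤ f x) (hf_mono : Monotone f)
    (Z : ℝ) (hZ : Z = ∫ a, f (Q a - V) ∂μ) (hZ_pos : 0 < Z)
    (ν : Measure α)
    (hν : ν = μ.withDensity (fun a => ENNReal.ofReal (f (Q a - V) / Z))) :
    ∫ a, Q a ∂ν ≥ ∫ a, Q a ∂μ :=
  reweighting_improvement_general μ Q hQ_meas hQ_bdd V f hf_meas hf_bdd hf_nonneg hf_mono Z hZ
    hZ_pos ν hν
end

section
/- Let (α, 𝒜) be a measurable space, μ a probability measure on α, Q : α → ℝ a bounded measurable function, and set V = ∫ Q(a) dμ(a). Let f : ℝ → ℝ be a bounded, measurable, non-negative, monotone non-decreasing function, and let 0 ≤ w₁ ≤ w₂ be real numbers. Suppose Zᵢ = ∫ f(Q(a) − V)^{wᵢ} dμ(a) > 0 for i = 1, 2 (real powers taken with the convention 0⁰ = 1), and define probability measures νᵢ on α by dνᵢ/dμ = f(Q − V)^{wᵢ}/Zᵢ. Then ∫ Q(a) dν₂(a) ≥ ∫ Q(a) dν₁(a). -/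
open MeasureTheory


lemma integrable_of_bdd' {α : Type*} [MeasurableSpace α] (μ : Measure α)
    [IsFiniteMeasure μ] {f : α → ℝ} (hm : Measurable f) (C : ℝ)
    (hb : ∀ a, |f a| ≤ C) : Integrable f μ :=
  Integrable.mono' (integrable_const C) hm.aestronglyMeasurable
    (Filter.Eventually.of_forall hb)

lemma prod_integrable_of_bdd {α : Type*} [MeasurableSpace α] (μ ν : Measure α)
    [IsFiniteMeasure μ] [IsFiniteMeasure ν] {φ ψ : α → ℝ}
    (hφ : Measurable φ) (hψ : Measurable ψ) (Cφ Cψ : ℝ)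
    (hbφ : ∀ a, |φ a| ≤ Cφ) (hbψ : ∀ a, |ψ a| ≤ Cψ) :
    Integrable (fun z : α × α => φ z.1 * ψ z.2) (μ.prod ν) := by
  refine integrable_of_bdd' _ ((hφ.comp measurable_fst).mul (hψ.comp measurable_snd))
    (Cφ * Cψ) (fun z => ?_)
  rw [abs_mul]
  exact mul_le_mul (hbφ z.1) (hbψ z.2) (abs_nonneg _)
    ((abs_nonneg (φ z.1)).trans (hbφ z.1))

lemma rpow_rearrange {x y : ℝ} (hy : 0 ≤ y) (hxy : y ≤ x) {w₁ w₂ : ℝ}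
    (hw₁ : 0 ≤ w₁) (hw : w₁ ≤ w₂) : x ^ w₁ * y ^ w₂ ≤ x ^ w₂ * y ^ w₁ := by
  have hx : 0 ≤ x := hy.trans hxy
  rcases eq_or_lt_of_le hy with h0 | hy'
  · subst y
    rcases eq_or_lt_of_le hw₁ with h1 | hw₁'
    · subst w₁
      rw [Real.rpow_zero, Real.rpow_zero, one_mul, mul_one]
      rcases eq_or_lt_of_le hw with h2 | hw₂'
      · subst w₂; simp
      · rw [Real.zero_rpow (ne_of_gt hw₂')]
        exact Real.rpow_nonneg hx w₂
    · have hw₂' : 0 < w₂ := lt_of_lt_of_le hw₁' hw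
      rw [Real.zero_rpow (ne_of_gt hw₁'), Real.zero_rpow (ne_of_gt hw₂')]
      simp
  · have hx' : 0 < x := lt_of_lt_of_le hy' hxy
    have h1 : (1:ℝ) ≤ x / y := (one_le_div hy').mpr hxy
    have h2 := Real.rpow_le_rpow_of_exponent_le h1 hw
    rw [Real.div_rpow hx hy w₁, Real.div_rpow hx hy w₂] at h2
    exact (div_le_div_iff₀ (Real.rpow_pos_of_pos hy' w₁)
      (Real.rpow_pos_of_pos hy' w₂)).mp h2

/-- Integral against a normalized reweighted measure. -/
lemma reweight_integral {α : Type*} [MeasurableSpace α] (μ : Measure α)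
    [IsProbabilityMeasure μ] (Q h : α → ℝ) (hQm : Measurable Q)
    (hhm : Measurable h) (hh0 : ∀ a, 0 ≤ h a) {Z : ℝ} (hZpos : 0 < Z) :
    ∫ a, Q a ∂(μ.withDensity (fun a => ENNReal.ofReal (h a / Z)))
      = (∫ a, Q a * h a ∂μ) / Z := by
  have hm : Measurable (fun a => (h a / Z).toNNReal) :=
    (hhm.div_const Z).real_toNNReal
  have hcoe : (fun a => ENNReal.ofReal (h a / Z))
      = fun a => ((h a / Z).toNNReal : ENNReal) := rfl
  rw [hcoe, integral_withDensity_eq_integral_smul hm Q]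
  have : ∀ a, (h a / Z).toNNReal • Q a = Q a * h a / Z := by
    intro a
    rw [NNReal.smul_def, smul_eq_mul,
      Real.coe_toNNReal _ (div_nonneg (hh0 a) hZpos.le)]
    ring
  rw [integral_congr_ae (Filter.Eventually.of_forall this), integral_div]

/-- The abstract exchange argument on the product measure. -/
lemma exchange_ineq {α : Type*} [MeasurableSpace α] (μ : Measure α)
    [IsProbabilityMeasure μ] (Q h₁ h₂ : α → ℝ)
    (hQm : Measurable Q) (h₁m : Measurable h₁) (h₂m : Measurable h₂)
    (CQ C₁ C₂ : ℝ) (hbQ : ∀ a, |Q a| ≤ CQ) (hb₁ : ∀ a, |h₁ a| ≤ C₁)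
    (hb₂ : ∀ a, |h₂ a| ≤ C₂)
    (hpt : ∀ a b, Q a ≤ Q b → h₂ a * h₁ b ≤ h₁ a * h₂ b)
    {Z₁ Z₂ : ℝ} (hZ₁ : Z₁ = ∫ a, h₁ a ∂μ) (hZ₁_pos : 0 < Z₁)
    (hZ₂ : Z₂ = ∫ a, h₂ a ∂μ) (hZ₂_pos : 0 < Z₂) :
    (∫ a, Q a * h₁ a ∂μ) / Z₁ ≤ (∫ a, Q a * h₂ a ∂μ) / Z₂ := by
  rw [div_le_div_iff₀ hZ₁_pos hZ₂_pos]
  have hQ₁m : Measurable (fun a => Q a * h₁ a) := hQm.mul h₁m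
  have hQ₂m : Measurable (fun a => Q a * h₂ a) := hQm.mul h₂m
  have hbQ₁ : ∀ a, |Q a * h₁ a| ≤ CQ * C₁ := fun a => by
    rw [abs_mul]; exact mul_le_mul (hbQ a) (hb₁ a) (abs_nonneg _)
      ((abs_nonneg _).trans (hbQ a))
  have hbQ₂ : ∀ a, |Q a * h₂ a| ≤ CQ * C₂ := fun a => by
    rw [abs_mul]; exact mul_le_mul (hbQ a) (hb₂ a) (abs_nonneg _)
      ((abs_nonneg _).trans (hbQ a))
  have i1 : Integrable (fun z : α × α => (Q z.1 * h₂ z.1) * h₁ z.2) (μ.prod μ) :=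
    prod_integrable_of_bdd μ μ hQ₂m h₁m _ _ hbQ₂ hb₁
  have i2 : Integrable (fun z : α × α => (Q z.1 * h₁ z.1) * h₂ z.2) (μ.prod μ) :=
    prod_integrable_of_bdd μ μ hQ₁m h₂m _ _ hbQ₁ hb₂
  have i3 : Integrable (fun z : α × α => h₁ z.1 * (Q z.2 * h₂ z.2)) (μ.prod μ) :=
    prod_integrable_of_bdd μ μ h₁m hQ₂m _ _ hb₁ hbQ₂
  have i4 : Integrable (fun z : α × α => h₂ z.1 * (Q z.2 * h₁ z.2)) (μ.prod μ) :=
    prod_integrable_of_bdd μ μ h₂m hQ₁m _ _ hb₂ hbQ₁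
  have i12 : Integrable (fun z : α × α =>
      (Q z.1 * h₂ z.1) * h₁ z.2 - (Q z.1 * h₁ z.1) * h₂ z.2) (μ.prod μ) := i1.sub i2
  have i34 : Integrable (fun z : α × α =>
      h₁ z.1 * (Q z.2 * h₂ z.2) - h₂ z.1 * (Q z.2 * h₁ z.2)) (μ.prod μ) := i3.sub i4
  have e1 : ∫ z : α × α, (Q z.1 * h₂ z.1) * h₁ z.2 ∂(μ.prod μ)
      = (∫ a, Q a * h₂ a ∂μ) * Z₁ := by
    rw [hZ₁]; exact integral_prod_mul (fun a => Q a * h₂ a) h₁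
  have e2 : ∫ z : α × α, (Q z.1 * h₁ z.1) * h₂ z.2 ∂(μ.prod μ)
      = (∫ a, Q a * h₁ a ∂μ) * Z₂ := by
    rw [hZ₂]; exact integral_prod_mul (fun a => Q a * h₁ a) h₂
  have e3 : ∫ z : α × α, h₁ z.1 * (Q z.2 * h₂ z.2) ∂(μ.prod μ)
      = Z₁ * (∫ a, Q a * h₂ a ∂μ) := by
    rw [hZ₁]; exact integral_prod_mul h₁ (fun a => Q a * h₂ a)
  have e4 : ∫ z : α × α, h₂ z.1 * (Q z.2 * h₁ z.2) ∂(μ.prod μ)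
      = Z₂ * (∫ a, Q a * h₁ a ∂μ) := by
    rw [hZ₂]; exact integral_prod_mul h₂ (fun a => Q a * h₁ a)
  have hnn : 0 ≤ ∫ z : α × α,
      (((Q z.1 * h₂ z.1) * h₁ z.2 - (Q z.1 * h₁ z.1) * h₂ z.2)
        + (h₁ z.1 * (Q z.2 * h₂ z.2) - h₂ z.1 * (Q z.2 * h₁ z.2))) ∂(μ.prod μ) := by
    refine integral_nonneg fun z => ?_
    show (0:ℝ) ≤ _
    rcases le_total (Q z.1) (Q z.2) with hq | hq
    · have key := hpt z.1 z.2 hq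
      nlinarith [mul_nonneg (sub_nonneg.mpr hq) (sub_nonneg.mpr key)]
    · have key := hpt z.2 z.1 hq
      nlinarith [mul_nonneg (sub_nonneg.mpr hq) (sub_nonneg.mpr key)]
  rw [integral_add i12 i34, integral_sub i1 i2, integral_sub i3 i4,
    e1, e2, e3, e4] at hnn
  linarith

/-- Per-state attenuation theorem (Theorem A.5): reweighting by a larger
power of a non-negative non-decreasing function of the advantage gives a
larger expected `Q`-value. Real powers are `Real.rpow`, with `0 ^ 0 = 1`. -/
theorem attenuation_improvement
    {α : Type*} [MeasurableSpace α]
    (μ : Measure α) [IsProbabilityMeasure μ]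
    (Q : α → ℝ) (hQ_meas : Measurable Q) (hQ_bdd : ∃ C : ℝ, ∀ a, |Q a| ≤ C)
    (V : ℝ) (hV : V = ∫ a, Q a ∂μ)
    (f : ℝ → ℝ)
    (hf_meas : Measurable f) (hf_bdd : ∃ C : ℝ, ∀ x, |f x| ≤ C)
    (hf_nonneg : ∀ x, 0 ≤ f x) (hf_mono : Monotone f)
    (w₁ w₂ : ℝ) (hw₁ : 0 ≤ w₁) (hw : w₁ ≤ w₂)
    (Z₁ Z₂ : ℝ)
    (hZ₁ : Z₁ = ∫ a, f (Q a - V) ^ w₁ ∂μ) (hZ₁_pos : 0 < Z₁)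
    (hZ₂ : Z₂ = ∫ a, f (Q a - V) ^ w₂ ∂μ) (hZ₂_pos : 0 < Z₂)
    (ν₁ ν₂ : Measure α)
    (hν₁ : ν₁ = μ.withDensity (fun a => ENNReal.ofReal (f (Q a - V) ^ w₁ / Z₁)))
    (hν₂ : ν₂ = μ.withDensity (fun a => ENNReal.ofReal (f (Q a - V) ^ w₂ / Z₂))) :
    ∫ a, Q a ∂ν₂ ≥ ∫ a, Q a ∂ν₁ := by
  obtain ⟨CQ, hCQ⟩ := hQ_bdd
  obtain ⟨Cf, hCf⟩ := hf_bdd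
  have hgm : Measurable (fun a => f (Q a - V)) :=
    hf_meas.comp (hQ_meas.sub measurable_const)
  have h₁m : Measurable (fun a => f (Q a - V) ^ w₁) :=
    (Real.continuous_rpow_const hw₁).measurable.comp hgm
  have h₂m : Measurable (fun a => f (Q a - V) ^ w₂) :=
    (Real.continuous_rpow_const (hw₁.trans hw)).measurable.comp hgm
  have hg0 : ∀ a, 0 ≤ f (Q a - V) := fun a => hf_nonneg _
  have h₁0 : ∀ a, 0 ≤ f (Q a - V) ^ w₁ := fun a => Real.rpow_nonneg (hg0 a) _
  have h₂0 : ∀ a, 0 ≤ f (Q a - V) ^ w₂ := fun a => Real.rpow_nonneg (hg0 a) _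
  have hgb : ∀ a, f (Q a - V) ≤ max Cf 0 :=
    fun a => ((le_abs_self _).trans (hCf _)).trans (le_max_left _ _)
  have hb₁ : ∀ a, |f (Q a - V) ^ w₁| ≤ (max Cf 0) ^ w₁ := fun a => by
    rw [abs_of_nonneg (h₁0 a)]
    exact Real.rpow_le_rpow (hg0 a) (hgb a) hw₁
  have hb₂ : ∀ a, |f (Q a - V) ^ w₂| ≤ (max Cf 0) ^ w₂ := fun a => by
    rw [abs_of_nonneg (h₂0 a)]
    exact Real.rpow_le_rpow (hg0 a) (hgb a) (hw₁.trans hw)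
  have hCQ' : ∀ a, |Q a| ≤ max CQ 0 := fun a => (hCQ a).trans (le_max_left _ _)
  have hpt : ∀ a b, Q a ≤ Q b →
      f (Q a - V) ^ w₂ * f (Q b - V) ^ w₁
        ≤ f (Q a - V) ^ w₁ * f (Q b - V) ^ w₂ := by
    intro a b hq
    have hgab : f (Q a - V) ≤ f (Q b - V) := hf_mono (by linarith)
    have := rpow_rearrange (hg0 a) hgab hw₁ hw
    linarith
  rw [hν₁, hν₂,
    reweight_integral μ Q _ hQ_meas h₁m h₁0 hZ₁_pos,
    reweight_integral μ Q _ hQ_meas h₂m h₂0 hZ₂_pos]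
  exact exchange_ineq μ Q _ _ hQ_meas h₁m h₂m (max CQ 0) ((max Cf 0) ^ w₁)
    ((max Cf 0) ^ w₂) hCQ' hb₁ hb₂ hpt hZ₁ hZ₁_pos hZ₂ hZ₂_pos
end

section
/- Let λ be a probability measure on ℝ (with the Borel σ-algebra) with ∫ |x| dλ(x) < ∞, let f : ℝ → ℝ be a bounded, measurable, non-negative, monotone non-decreasing function, and let 0 ≤ w₁ ≤ w₂ be real numbers (real powers taken with the convention 0⁰ = 1). Then (∫ x·f(x)^{w₂} dλ(x)) · (∫ f(x)^{w₁} dλ(x)) ≥ (∫ x·f(x)^{w₁} dλ(x)) · (∫ f(x)^{w₂} dλ(x)). -/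
/-!
Chebyshev's trick: with `g = f ^ w₁` and `h = f ^ w₂`, the integrand
`(x - y) * (h x * g y - h y * g x)` is pointwise non-negative on `ℝ × ℝ`, because `f` is monotone
and `h / g = f ^ (w₂ - w₁)` is non-decreasing in `f`. Integrating it against `μ ⊗ μ` gives twice
the difference of the two sides.
-/

open MeasureTheory

namespace Real

theorem rpow_mul_rpow_le_rpow_mul_rpow {a b w₁ w₂ : ℝ} (hb : 0 ≤ b) (hba : b ≤ a)
    (hw₁ : 0 ≤ w₁) (hw : w₁ ≤ w₂) : b ^ w₂ * a ^ w₁ ≤ a ^ w₂ * b ^ w₁ := by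
  rcases (hw₁.trans hw).eq_or_lt with hw₂ | hw₂
  · obtain rfl : w₁ = 0 := le_antisymm (hw.trans hw₂.ge) hw₁
    simp [← hw₂]
  have ha : 0 ≤ a := hb.trans hba
  have hsplit : w₂ = w₁ + (w₂ - w₁) := by ring
  rw [hsplit, rpow_add' ha (by linarith), rpow_add' hb (by linarith)]
  have hpow : b ^ (w₂ - w₁) ≤ a ^ (w₂ - w₁) := rpow_le_rpow hb hba (by linarith)
  calc b ^ w₁ * b ^ (w₂ - w₁) * a ^ w₁ = a ^ w₁ * b ^ w₁ * b ^ (w₂ - w₁) := by ring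
    _ ≤ a ^ w₁ * b ^ w₁ * a ^ (w₂ - w₁) := by gcongr
    _ = a ^ w₁ * a ^ (w₂ - w₁) * b ^ w₁ := by ring

theorem norm_rpow_le_rpow_of_abs_le {a C w : ℝ} (ha : 0 ≤ a) (haC : |a| ≤ C) (hw : 0 ≤ w) :
    ‖a ^ w‖ ≤ C ^ w := by
  rw [norm_of_nonneg (rpow_nonneg ha w)]
  exact rpow_le_rpow ha ((le_abs_self a).trans haC) hw

end Real

theorem Monotone.sub_mul_rpow_cross_nonneg {f : ℝ → ℝ} (hf : Monotone f) (hf_nonneg : ∀ x, 0 ≤ f x)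
    {w₁ w₂ : ℝ} (hw₁ : 0 ≤ w₁) (hw : w₁ ≤ w₂) (x y : ℝ) :
    0 ≤ (x - y) * (f x ^ w₂ * f y ^ w₁ - f y ^ w₂ * f x ^ w₁) := by
  rcases le_total y x with hyx | hxy
  · exact mul_nonneg (by linarith) (sub_nonneg.2
      (Real.rpow_mul_rpow_le_rpow_mul_rpow (hf_nonneg y) (hf hyx) hw₁ hw))
  · exact mul_nonneg_of_nonpos_of_nonpos (by linarith) (sub_nonpos.2
      (Real.rpow_mul_rpow_le_rpow_mul_rpow (hf_nonneg x) (hf hxy) hw₁ hw))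

namespace MeasureTheory

theorem integral_mul_integral_le_of_cross_nonneg {α : Type*} [MeasurableSpace α]
    {μ : Measure α} [SFinite μ] {φ g h : α → ℝ} (hg : Integrable g μ) (hh : Integrable h μ)
    (hφg : Integrable (fun x => φ x * g x) μ) (hφh : Integrable (fun x => φ x * h x) μ)
    (hcross : ∀ x y, 0 ≤ (φ x - φ y) * (h x * g y - h y * g x)) :
    (∫ x, φ x * g x ∂μ) * (∫ x, h x ∂μ) ≤ (∫ x, φ x * h x ∂μ) * (∫ x, g x ∂μ) := by
  have hexpand : (fun z : α × α => (φ z.1 - φ z.2) * (h z.1 * g z.2 - h z.2 * g z.1)) =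
      fun z => φ z.1 * h z.1 * g z.2 - φ z.1 * g z.1 * h z.2 - h z.1 * (φ z.2 * g z.2)
        + g z.1 * (φ z.2 * h z.2) := by
    ext z; ring
  have hdouble : 0 ≤ ∫ z, (φ z.1 - φ z.2) * (h z.1 * g z.2 - h z.2 * g z.1) ∂μ.prod μ :=
    integral_nonneg fun z => hcross z.1 z.2
  have i₁ := hφh.mul_prod hg
  have i₂ := hφg.mul_prod hh
  have i₃ := hh.mul_prod hφg
  have i₄ := hg.mul_prod hφh
  rw [hexpand, integral_add ((i₁.sub' i₂).sub' i₃) i₄, integral_sub (i₁.sub' i₂) i₃,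
    integral_sub i₁ i₂, integral_prod_mul (fun x => φ x * h x) g,
    integral_prod_mul (fun x => φ x * g x) h, integral_prod_mul h (fun x => φ x * g x),
    integral_prod_mul g (fun x => φ x * h x)] at hdouble
  linarith

end MeasureTheory

/-- Real-line cross-product inequality underlying Theorem A.5. Real powers
are `Real.rpow`, with `0 ^ 0 = 1`. -/
theorem cross_product_inequality
    (μ : Measure ℝ) [IsProbabilityMeasure μ]
    (hint : Integrable (fun x : ℝ => x) μ)
    (f : ℝ → ℝ)
    (hf_meas : Measurable f) (hf_bdd : ∃ C : ℝ, ∀ x, |f x| ≤ C)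
    (hf_nonneg : ∀ x, 0 ≤ f x) (hf_mono : Monotone f)
    (w₁ w₂ : ℝ) (hw₁ : 0 ≤ w₁) (hw : w₁ ≤ w₂) :
    (∫ x, x * f x ^ w₂ ∂μ) * (∫ x, f x ^ w₁ ∂μ)
      ≥ (∫ x, x * f x ^ w₁ ∂μ) * (∫ x, f x ^ w₂ ∂μ) := by
  obtain ⟨C, hC⟩ := hf_bdd
  have hmeas (w : ℝ) : AEStronglyMeasurable (fun x => f x ^ w) μ :=
    (hf_meas.pow_const w).aestronglyMeasurable
  have hbound {w : ℝ} (hw : 0 ≤ w) : ∀ᵐ x ∂μ, ‖f x ^ w‖ ≤ C ^ w :=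
    ae_of_all μ fun x => Real.norm_rpow_le_rpow_of_abs_le (hf_nonneg x) (hC x) hw
  have hw₂ : 0 ≤ w₂ := hw₁.trans hw
  exact integral_mul_integral_le_of_cross_nonneg
    (.of_bound (hmeas w₁) _ (hbound hw₁)) (.of_bound (hmeas w₂) _ (hbound hw₂))
    (hint.mul_bdd (hmeas w₁) (hbound hw₁)) (hint.mul_bdd (hmeas w₂) (hbound hw₂))
    (hf_mono.sub_mul_rpow_cross_nonneg hf_nonneg hw₁ hw)
end

section
/- Let (α, 𝒜) be a measurable space, μ a probability measure on α, A : α → ℝ a bounded measurable function, and β > 0 a real number. Set Z = ∫ exp(A(a)/β) dμ(a), and define the probability measure ν* on α by dν*/dμ = exp(A/β)/Z. Then KL(ν*‖μ) is finite and ∫ A(a) dν*(a) − β·KL(ν*‖μ) = β·log Z; in particular, ν* attains the supremum of ν ↦ ∫ A dν − β·KL(ν‖μ) over probability measures ν absolutely continuous with respect to μ with finite KL(ν‖μ). -/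
/-!
The value `∫ f dν - KL(ν‖μ)` differs from `log ∫ exp f dμ` by exactly `KL(ν‖μ_f)`, where
`μ_f ∝ exp f · μ` is the exponentially tilted measure. Gibbs' inequality `KL(ν‖μ_f) ≥ 0` therefore
bounds every value by `log ∫ exp f dμ`, with equality at `ν = μ_f`. The theorem is the case `f = A / β`,
rescaled by `β > 0`.
-/

open MeasureTheory

noncomputable def klDivR {α : Type*} [MeasurableSpace α] (ν μ : Measure α) : ℝ :=
  ∫ a, Real.log ((ν.rnDeriv μ a).toReal) ∂ν

lemma klDivR_eq_integral_llr {α : Type*} [MeasurableSpace α] (ν μ : Measure α) :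
    klDivR ν μ = ∫ a, llr ν μ a ∂ν :=
  rfl

open Real

namespace MeasureTheory

variable {α : Type*} {mα : MeasurableSpace α} {μ ν : Measure α} {f : α → ℝ}

lemma integrable_llr_tilted_self [SigmaFinite μ] (hf : Integrable (fun x ↦ exp (f x)) μ)
    (hf_tilted : Integrable f (μ.tilted f)) :
    Integrable (llr (μ.tilted f) μ) (μ.tilted f) :=
  ((hf_tilted.sub (integrable_const _)).congr
    ((tilted_absolutelyContinuous μ f).ae_eq (log_rnDeriv_tilted_left_self hf)).symm)

lemma integral_sub_integral_llr_tilted_self [SigmaFinite μ] [NeZero μ]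
    (hf : Integrable (fun x ↦ exp (f x)) μ) (hf_tilted : Integrable f (μ.tilted f)) :
    ∫ x, f x ∂μ.tilted f - ∫ x, llr (μ.tilted f) μ x ∂μ.tilted f
      = log (∫ x, exp (f x) ∂μ) := by
  have := isProbabilityMeasure_tilted hf
  have h_llr : llr (μ.tilted f) μ =ᵐ[μ.tilted f] fun x ↦ f x - log (∫ x, exp (f x) ∂μ) :=
    (tilted_absolutelyContinuous μ f).ae_eq (log_rnDeriv_tilted_left_self hf)
  rw [integral_congr_ae h_llr,
    integral_sub hf_tilted (integrable_const _), integral_const, probReal_univ, one_smul,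
    sub_sub_cancel]

lemma integral_sub_integral_llr_le_log_integral_exp [SigmaFinite μ] [NeZero μ]
    [IsProbabilityMeasure ν] (hνμ : ν ≪ μ) (hf : Integrable (fun x ↦ exp (f x)) μ)
    (hfν : Integrable f ν) (h_int : Integrable (llr ν μ) ν) :
    ∫ x, f x ∂ν - ∫ x, llr ν μ x ∂ν ≤ log (∫ x, exp (f x) ∂μ) := by
  have := isProbabilityMeasure_tilted hf
  have h_kl_nonneg : 0 ≤ ∫ x, llr ν (μ.tilted f) x ∂ν := by
    rw [← InformationTheory.toReal_klDiv_of_measure_eq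
      (hνμ.trans (absolutelyContinuous_tilted hf)) (by simp)]
    exact ENNReal.toReal_nonneg
  rw [integral_llr_tilted_right hνμ hfν hf h_int] at h_kl_nonneg
  linarith

end MeasureTheory

/-- Attainment direction of the variational characterization (Remark 3.1):
the measure `ν* ∝ exp(A/β)·μ` is a probability measure with finite KL
divergence, attains value `β·log Z`, and maximizes
`ν ↦ ∫ A dν − β·KL(ν‖μ)` over probability measures `ν ≪ μ` with finite KL. -/
theorem kl_variational_attainment
    {α : Type*} [MeasurableSpace α]
    (μ : Measure α) [IsProbabilityMeasure μ]
    (A : α → ℝ) (hA_meas : Measurable A) (hA_bdd : ∃ C : ℝ, ∀ a, |A a| ≤ C)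
    (β : ℝ) (hβ : 0 < β)
    (Z : ℝ) (hZ : Z = ∫ a, Real.exp (A a / β) ∂μ)
    (νstar : Measure α)
    (hνstar : νstar = μ.withDensity (fun a => ENNReal.ofReal (Real.exp (A a / β) / Z))) :
    IsProbabilityMeasure νstar
    ∧ Integrable (fun a => Real.log ((νstar.rnDeriv μ a).toReal)) νstar
    ∧ ∫ a, A a ∂νstar - β * klDivR νstar μ = β * Real.log Z
    ∧ ∀ (ν : Measure α), IsProbabilityMeasure ν → ν ≪ μ →
        Integrable (fun a => Real.log ((ν.rnDeriv μ a).toReal)) ν →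
        ∫ a, A a ∂ν - β * klDivR ν μ ≤ ∫ a, A a ∂νstar - β * klDivR νstar μ := by
  obtain ⟨C, hC⟩ := hA_bdd
  set f : α → ℝ := fun a ↦ A a / β
  subst hZ
  obtain rfl : νstar = μ.tilted f := hνstar
  have hf_bdd (a : α) : |f a| ≤ C / β := by
    rw [abs_div, abs_of_pos hβ]
    gcongr
    exact hC a
  have hf_int (ρ : Measure α) [IsFiniteMeasure ρ] : Integrable f ρ :=
    .of_bound (hA_meas.div_const β).aestronglyMeasurable (C / β) (.of_forall hf_bdd)
  have hexp_int : Integrable (fun a ↦ exp (f a)) μ :=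
    .of_bound (hA_meas.div_const β).exp.aestronglyMeasurable (exp (C / β)) (.of_forall fun a ↦ by
      rw [Real.norm_of_nonneg (exp_pos _).le]
      exact exp_le_exp.2 (abs_le.1 (hf_bdd a)).2)
  have hprob := isProbabilityMeasure_tilted hexp_int
  have hscale (ρ : Measure α) :
      ∫ a, A a ∂ρ - β * klDivR ρ μ = β * (∫ a, f a ∂ρ - ∫ a, llr ρ μ a ∂ρ) := by
    rw [integral_div, mul_sub, mul_div_cancel₀ _ hβ.ne', klDivR_eq_integral_llr]
  have hval := integral_sub_integral_llr_tilted_self hexp_int (hf_int _)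
  refine ⟨hprob, integrable_llr_tilted_self hexp_int (hf_int _), by rw [hscale, hval],
    fun ν hν hνμ h_int ↦ ?_⟩
  rw [hscale, hscale, hval]
  exact mul_le_mul_of_nonneg_left
    (integral_sub_integral_llr_le_log_integral_exp hνμ hexp_int (hf_int ν) h_int) hβ.le
end
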